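/- Let m be a positive integer, let S be a real symmetric positive definite m×m matrix, λ > 0 and η ∈ ℝ^m, and set g := g_{S,λ,S⁻¹η}. Let p : ℝ^m → [0,∞) be a measurable probability density with respect to Lebesgue measure such that ∫ ‖a‖² p(a) da < ∞ and ∫ p(a) |log p(a)| da < ∞ (with 0·log 0 = 0). Then ∫_{ℝ^m} (aᵀ S a + 2 aᵀ η + λ log p(a)) p(a) da ≥ −ηᵀ S⁻¹ η − (λ/2)(m·log(πλ) − log det S), with equality if and only if p = g Lebesgue-almost everywhere. In particular, the unique minimizer (up to almost-everywhere equality) of this entropy-regularized quadratic functional over such densities is the Gaussian density g. -/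

import Mathlib

/-!
With `v = S⁻¹η`, completing the square gives `aᵀSa + 2aᵀη = (a+v)ᵀS(a+v) − ηᵀv`, and
`(a+v)ᵀS(a+v) = −λ log g(a) + const` for the Gaussian `g = g_{S,λ,v}`. Hence the functional
equals `λ ∫ p log (p/g) + const`, and since `g` is a probability density (a Gaussian integral
after the substitution `x ↦ S^{1/2} x`) the constant is exactly the claimed bound. Gibbs'
inequality finishes the proof: `p log (p/g) − p + g = g · klFun (p/g)` is nonnegative and
vanishes only where `p = g`, while `∫ (p − g) = 0`.
-/

open Matrix MeasureTheory

/-- The Gaussian density `g_{S,λ,v}(a) = (det S)^{1/2} (πλ)^{−m/2}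
exp(−(1/λ)(a+v)ᵀ S (a+v))`. -/
noncomputable def gaussDensity {m : ℕ} (S : Matrix (Fin m) (Fin m) ℝ) (lam : ℝ)
    (v : Fin m → ℝ) (a : Fin m → ℝ) : ℝ :=
  Real.sqrt S.det * (Real.pi * lam) ^ (-(m : ℝ) / 2)
    * Real.exp (-(1 / lam) * ((a + v) ⬝ᵥ (S *ᵥ (a + v))))

open Real InformationTheory

section Gibbs

variable {α : Type*} [MeasurableSpace α] {μ : Measure α} {p g : α → ℝ}

lemma mul_log_sub_log_sub_sub_eq_mul_klFun {x y : ℝ} (hx : 0 ≤ x) (hy : 0 < y) :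
    x * (log x - log y) - (x - y) = y * klFun (x / y) := by
  rcases hx.eq_or_lt with rfl | hx
  · simp [klFun_zero]
  · rw [klFun_apply, log_div hx.ne' hy.ne']
    field_simp
    ring

lemma integral_mul_log_sub_log_eq_integral_mul_klFun (hp : ∀ a, 0 ≤ p a) (hg : ∀ a, 0 < g a)
    (hpi : Integrable p μ) (hgi : Integrable g μ) (hpg : ∫ a, p a ∂μ = ∫ a, g a ∂μ)
    (hkl : Integrable (fun a => p a * (log (p a) - log (g a))) μ) :
    Integrable (fun a => g a * klFun (p a / g a)) μ ∧
      ∫ a, p a * (log (p a) - log (g a)) ∂μ = ∫ a, g a * klFun (p a / g a) ∂μ := by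
  have hD : (fun a => g a * klFun (p a / g a))
      = fun a => p a * (log (p a) - log (g a)) - (p a - g a) :=
    funext fun a => (mul_log_sub_log_sub_sub_eq_mul_klFun (hp a) (hg a)).symm
  have hpgi : Integrable (fun a => p a - g a) μ := hpi.sub hgi
  rw [hD, integral_sub hkl hpgi, integral_sub hpi hgi, hpg, sub_self, sub_zero]
  exact ⟨hkl.sub hpgi, rfl⟩

theorem integral_mul_log_sub_log_nonneg (hp : ∀ a, 0 ≤ p a) (hg : ∀ a, 0 < g a)
    (hpi : Integrable p μ) (hgi : Integrable g μ) (hpg : ∫ a, p a ∂μ = ∫ a, g a ∂μ)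
    (hkl : Integrable (fun a => p a * (log (p a) - log (g a))) μ) :
    0 ≤ ∫ a, p a * (log (p a) - log (g a)) ∂μ := by
  rw [(integral_mul_log_sub_log_eq_integral_mul_klFun hp hg hpi hgi hpg hkl).2]
  exact integral_nonneg fun a =>
    mul_nonneg (hg a).le (klFun_nonneg (div_nonneg (hp a) (hg a).le))

theorem integral_mul_log_sub_log_eq_zero_iff (hp : ∀ a, 0 ≤ p a) (hg : ∀ a, 0 < g a)
    (hpi : Integrable p μ) (hgi : Integrable g μ) (hpg : ∫ a, p a ∂μ = ∫ a, g a ∂μ)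
    (hkl : Integrable (fun a => p a * (log (p a) - log (g a))) μ) :
    ∫ a, p a * (log (p a) - log (g a)) ∂μ = 0 ↔ p =ᵐ[μ] g := by
  obtain ⟨hDi, hD⟩ := integral_mul_log_sub_log_eq_integral_mul_klFun hp hg hpi hgi hpg hkl
  have hpg_div : ∀ a, 0 ≤ p a / g a := fun a => div_nonneg (hp a) (hg a).le
  rw [hD, integral_eq_zero_iff_of_nonneg
    (fun a => mul_nonneg (hg a).le (klFun_nonneg (hpg_div a))) hDi]
  refine Filter.eventually_congr (Filter.Eventually.of_forall fun a => ?_)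
  rw [Pi.zero_apply, mul_eq_zero, or_iff_right (hg a).ne', klFun_eq_zero_iff (hpg_div a),
    div_eq_one_iff_eq (hg a).ne']

end Gibbs

section QuadraticForm

variable {ι : Type*} [Fintype ι]

lemma add_dotProduct_mulVec_add {R : Type*} [CommRing R] {S : Matrix ι ι R} (hS : Sᵀ = S)
    {v η : ι → R} (hv : S *ᵥ v = η) (a : ι → R) :
    (a + v) ⬝ᵥ S *ᵥ (a + v) = a ⬝ᵥ S *ᵥ a + 2 * (a ⬝ᵥ η) + η ⬝ᵥ v := by
  have hvSa : v ⬝ᵥ S *ᵥ a = a ⬝ᵥ η := by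
    rw [dotProduct_mulVec, ← mulVec_transpose, hS, hv, dotProduct_comm]
  rw [mulVec_add, dotProduct_add, add_dotProduct, add_dotProduct, hvSa, hv, dotProduct_comm v]
  ring

lemma mul_self_le_dotProduct_self (a : ι → ℝ) (i : ι) : a i * a i ≤ a ⬝ᵥ a :=
  Finset.single_le_sum (f := fun k => a k * a k) (fun _ _ => mul_self_nonneg _)
    (Finset.mem_univ i)

lemma abs_dotProduct_mulVec_self_le (A : Matrix ι ι ℝ) (x : ι → ℝ) :
    |x ⬝ᵥ A *ᵥ x| ≤ (∑ i, ∑ j, |A i j|) * (x ⬝ᵥ x) := by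
  have hpair : ∀ i j, |x i| * |x j| ≤ x ⬝ᵥ x := fun i j => by
    nlinarith [mul_self_le_dotProduct_self x i, mul_self_le_dotProduct_self x j,
      sq_nonneg (|x i| - |x j|), abs_mul_abs_self (x i), abs_mul_abs_self (x j)]
  have hrepr : x ⬝ᵥ A *ᵥ x = ∑ i, ∑ j, A i j * (x i * x j) := by
    simp only [dotProduct, mulVec, Finset.mul_sum]
    exact Finset.sum_congr rfl fun i _ => Finset.sum_congr rfl fun j _ => by ring
  rw [hrepr, Finset.sum_mul]
  refine (Finset.abs_sum_le_sum_abs _ _).trans (Finset.sum_le_sum fun i _ => ?_)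
  rw [Finset.sum_mul]
  refine (Finset.abs_sum_le_sum_abs _ _).trans (Finset.sum_le_sum fun j _ => ?_)
  rw [abs_mul, abs_mul]
  exact mul_le_mul_of_nonneg_left (hpair i j) (abs_nonneg _)

lemma add_dotProduct_add_self_le (a v : ι → ℝ) :
    (a + v) ⬝ᵥ (a + v) ≤ 2 * (a ⬝ᵥ a) + 2 * (v ⬝ᵥ v) := by
  simp only [dotProduct, Pi.add_apply, Finset.mul_sum, ← Finset.sum_add_distrib]
  exact Finset.sum_le_sum fun i _ => by nlinarith [sq_nonneg (a i - v i)]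

lemma dotProduct_transpose_mul_self_mulVec (A : Matrix ι ι ℝ) (x : ι → ℝ) :
    x ⬝ᵥ (Aᵀ * A) *ᵥ x = (A *ᵥ x) ⬝ᵥ (A *ᵥ x) := by
  rw [← mulVec_mulVec, dotProduct_mulVec, vecMul_transpose]

end QuadraticForm

section SecondMoment

variable {ι : Type*} [Fintype ι] {μ : Measure (ι → ℝ)} {p : (ι → ℝ) → ℝ}

lemma MeasureTheory.Integrable.mul_of_abs_le_dotProduct_self (hpi : Integrable p μ)
    (hp : ∀ a, 0 ≤ p a) (hp2 : Integrable (fun a => (a ⬝ᵥ a) * p a) μ) {f : (ι → ℝ) → ℝ}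
    (hf : Continuous f) {C D : ℝ} (hfCD : ∀ a, |f a| ≤ C * (a ⬝ᵥ a) + D) :
    Integrable (fun a => f a * p a) μ := by
  refine ((hp2.const_mul C).add (hpi.const_mul D)).mono'
    (hf.aestronglyMeasurable.mul hpi.aestronglyMeasurable)
    (Filter.Eventually.of_forall fun a => ?_)
  rw [norm_mul, Real.norm_eq_abs, Real.norm_of_nonneg (hp a)]
  calc |f a| * p a ≤ (C * (a ⬝ᵥ a) + D) * p a := mul_le_mul_of_nonneg_right (hfCD a) (hp a)
    _ = C * ((a ⬝ᵥ a) * p a) + D * p a := by ring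

lemma integrable_dotProduct_mulVec_add_mul (hp : ∀ a, 0 ≤ p a) (hpi : Integrable p μ)
    (hp2 : Integrable (fun a => (a ⬝ᵥ a) * p a) μ) (S : Matrix ι ι ℝ) (v : ι → ℝ) :
    Integrable (fun a => (a + v) ⬝ᵥ S *ᵥ (a + v) * p a) μ := by
  set K := ∑ i, ∑ j, |S i j|
  have hK : 0 ≤ K := by positivity
  refine hpi.mul_of_abs_le_dotProduct_self hp hp2 (C := 2 * K) (D := 2 * K * (v ⬝ᵥ v))
    (by fun_prop) fun a => ?_
  calc |(a + v) ⬝ᵥ S *ᵥ (a + v)| ≤ K * ((a + v) ⬝ᵥ (a + v)) :=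
        abs_dotProduct_mulVec_self_le S _
    _ ≤ K * (2 * (a ⬝ᵥ a) + 2 * (v ⬝ᵥ v)) :=
        mul_le_mul_of_nonneg_left (add_dotProduct_add_self_le a v) hK
    _ = 2 * K * (a ⬝ᵥ a) + 2 * K * (v ⬝ᵥ v) := by ring

end SecondMoment

section GaussianIntegral

variable {ι : Type*} [Fintype ι]

lemma exp_neg_mul_dotProduct_self (c : ℝ) (y : ι → ℝ) :
    exp (-c * (y ⬝ᵥ y)) = ∏ i, exp (-c * y i ^ 2) := by
  rw [← exp_sum, dotProduct, Finset.mul_sum]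
  exact congrArg exp (Finset.sum_congr rfl fun i _ => by ring)

lemma integrable_exp_neg_mul_dotProduct_self {c : ℝ} (hc : 0 < c) :
    Integrable fun y : ι → ℝ => exp (-c * (y ⬝ᵥ y)) := by
  simp only [exp_neg_mul_dotProduct_self]
  exact Integrable.fintype_prod (f := fun _ t => exp (-c * t ^ 2))
    fun _ => integrable_exp_neg_mul_sq hc

lemma integral_exp_neg_mul_dotProduct_self (c : ℝ) :
    ∫ y : ι → ℝ, exp (-c * (y ⬝ᵥ y)) = sqrt (π / c) ^ Fintype.card ι := by
  simp only [exp_neg_mul_dotProduct_self]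
  rw [volume_pi, integral_fintype_prod_eq_pow (fun t => exp (-c * t ^ 2)), integral_gaussian]

lemma measurable_mulVec (A : Matrix ι ι ℝ) :
    Measurable (A *ᵥ · : (ι → ℝ) → ι → ℝ) :=
  (continuous_const.matrix_mulVec continuous_id).measurable

lemma map_mulVec_volume [DecidableEq ι] {A : Matrix ι ι ℝ} (hA : A.det ≠ 0) :
    Measure.map (A *ᵥ ·) (volume : Measure (ι → ℝ))
      = ENNReal.ofReal |A.det|⁻¹ • volume := by
  have h := Real.map_matrix_volume_pi_eq_smul_volume_pi hA
  rwa [abs_inv, toLin'_apply', coe_mulVecLin] at h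

lemma MeasureTheory.Integrable.comp_mulVec [DecidableEq ι] {A : Matrix ι ι ℝ}
    (hA : A.det ≠ 0) {f : (ι → ℝ) → ℝ} (hf : Integrable f) :
    Integrable fun x => f (A *ᵥ x) := by
  have hfA : AEStronglyMeasurable f (Measure.map (A *ᵥ ·) volume) := by
    rw [map_mulVec_volume hA]
    exact hf.aestronglyMeasurable.smul_measure _
  refine (integrable_map_measure hfA (measurable_mulVec A).aemeasurable).mp ?_
  rw [map_mulVec_volume hA]
  exact hf.smul_measure ENNReal.ofReal_ne_top

lemma integral_comp_mulVec [DecidableEq ι] {A : Matrix ι ι ℝ} (hA : A.det ≠ 0)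
    {f : (ι → ℝ) → ℝ} (hf : Integrable f) :
    ∫ x, f (A *ᵥ x) = |A.det|⁻¹ * ∫ y, f y := by
  have hfA : AEStronglyMeasurable f (Measure.map (A *ᵥ ·) volume) := by
    rw [map_mulVec_volume hA]
    exact hf.aestronglyMeasurable.smul_measure _
  rw [← integral_map (measurable_mulVec A).aemeasurable hfA, map_mulVec_volume hA,
    integral_smul_measure, ENNReal.toReal_ofReal (by positivity), smul_eq_mul]

lemma Matrix.PosSemidef.exists_transpose_mul_self_eq [DecidableEq ι] {S : Matrix ι ι ℝ}
    (hS : S.PosSemidef) : ∃ A : Matrix ι ι ℝ, Aᵀ * A = S := by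
  open scoped MatrixOrder in
  refine ⟨CFC.sqrt S, ?_⟩
  rw [← conjTranspose_eq_transpose_of_trivial, (CFC.sqrt_nonneg S).posSemidef.1,
    CFC.sqrt_mul_sqrt_self S hS.nonneg]

lemma integrable_exp_neg_mul_dotProduct_mulVec [DecidableEq ι] {S : Matrix ι ι ℝ}
    (hS : S.PosDef) {c : ℝ} (hc : 0 < c) :
    Integrable fun x : ι → ℝ => exp (-c * (x ⬝ᵥ S *ᵥ x)) := by
  obtain ⟨A, rfl⟩ := hS.posSemidef.exists_transpose_mul_self_eq
  have hA : A.det ≠ 0 := fun h => by simpa [h] using hS.det_pos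
  simp only [dotProduct_transpose_mul_self_mulVec]
  exact (integrable_exp_neg_mul_dotProduct_self hc).comp_mulVec hA

lemma integral_exp_neg_mul_dotProduct_mulVec [DecidableEq ι] {S : Matrix ι ι ℝ}
    (hS : S.PosDef) {c : ℝ} (hc : 0 < c) :
    ∫ x : ι → ℝ, exp (-c * (x ⬝ᵥ S *ᵥ x))
      = sqrt (π / c) ^ Fintype.card ι / sqrt S.det := by
  obtain ⟨A, rfl⟩ := hS.posSemidef.exists_transpose_mul_self_eq
  have hA : A.det ≠ 0 := fun h => by simpa [h] using hS.det_pos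
  simp only [dotProduct_transpose_mul_self_mulVec]
  rw [integral_comp_mulVec hA (integrable_exp_neg_mul_dotProduct_self hc),
    integral_exp_neg_mul_dotProduct_self, det_mul, det_transpose, sqrt_mul_self_eq_abs,
    inv_mul_eq_div]

end GaussianIntegral

section GaussDensity

variable {m : ℕ} {S : Matrix (Fin m) (Fin m) ℝ} {lam : ℝ}

lemma gaussDensity_pos (hS : S.PosDef) (hlam : 0 < lam) (v a : Fin m → ℝ) :
    0 < gaussDensity S lam v a := by
  have := hS.det_pos
  unfold gaussDensity
  positivity

lemma mul_log_gaussDensity (hS : S.PosDef) (hlam : 0 < lam) (v a : Fin m → ℝ) :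
    lam * log (gaussDensity S lam v a)
      = -(lam / 2) * (m * log (π * lam) - log S.det) - (a + v) ⬝ᵥ S *ᵥ (a + v) := by
  have hdet := hS.det_pos
  unfold gaussDensity
  rw [log_mul (by positivity) (exp_pos _).ne', log_mul (by positivity) (by positivity),
    log_rpow (by positivity), log_sqrt hdet.le, log_exp]
  field_simp
  ring

lemma integrable_gaussDensity (hS : S.PosDef) (hlam : 0 < lam) (v : Fin m → ℝ) :
    Integrable (gaussDensity S lam v) :=
  ((integrable_exp_neg_mul_dotProduct_mulVec hS (one_div_pos.mpr hlam)).comp_add_right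
    v).const_mul _

lemma integral_gaussDensity (hS : S.PosDef) (hlam : 0 < lam) (v : Fin m → ℝ) :
    ∫ a, gaussDensity S lam v a = 1 := by
  have hdet := hS.det_pos
  have hpl : 0 < π * lam := by positivity
  have hsqrt : sqrt (π / (1 / lam)) ^ m = (π * lam) ^ ((m : ℝ) / 2) := by
    rw [div_div_eq_mul_div, div_one, sqrt_eq_rpow, ← rpow_natCast, ← rpow_mul hpl.le,
      one_div_mul_eq_div]
  unfold gaussDensity
  rw [integral_const_mul, integral_add_right_eq_self
      (fun x => exp (-(1 / lam) * (x ⬝ᵥ S *ᵥ x))) v,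
    integral_exp_neg_mul_dotProduct_mulVec hS (one_div_pos.mpr hlam), Fintype.card_fin, hsqrt,
    neg_div, rpow_neg hpl.le]
  field_simp

end GaussDensity

section Functional

variable {m : ℕ} {S : Matrix (Fin m) (Fin m) ℝ} {lam : ℝ} {p : (Fin m → ℝ) → ℝ}

lemma integrable_mul_log_sub_log_gaussDensity (hS : S.PosDef) (hlam : 0 < lam) (v : Fin m → ℝ)
    (hp_nonneg : ∀ a, 0 ≤ p a) (hp_int : Integrable p)
    (hp_mom2 : Integrable fun a => (a ⬝ᵥ a) * p a)
    (hp_ent : Integrable fun a => p a * |log (p a)|) :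
    Integrable fun a => p a * (log (p a) - log (gaussDensity S lam v a)) := by
  set c := -(lam / 2) * (m * log (π * lam) - log S.det)
  have hplogp : Integrable fun a => p a * log (p a) :=
    hp_ent.mono' (hp_int.aestronglyMeasurable.mul hp_int.aemeasurable.log.aestronglyMeasurable)
      (Filter.Eventually.of_forall fun a => by
        rw [norm_mul, norm_of_nonneg (hp_nonneg a), norm_eq_abs])
  have hplogg : Integrable fun a => lam⁻¹ * (c * p a - (a + v) ⬝ᵥ S *ᵥ (a + v) * p a) :=
    ((hp_int.const_mul c).sub
      (integrable_dotProduct_mulVec_add_mul hp_nonneg hp_int hp_mom2 S v)).const_mul _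
  refine (hplogp.sub hplogg).congr (Filter.Eventually.of_forall fun a => ?_)
  have hlog : log (gaussDensity S lam v a) = lam⁻¹ * (c - (a + v) ⬝ᵥ S *ᵥ (a + v)) := by
    rw [← mul_log_gaussDensity hS hlam v a, inv_mul_cancel_left₀ hlam.ne']
  simp only [hlog, Pi.sub_apply]
  ring

lemma integral_quadratic_add_entropy_eq (hS : S.PosDef) (hlam : 0 < lam) (η : Fin m → ℝ)
    (hp_prob : ∫ a, p a = 1) (hp_int : Integrable p)
    (hkl : Integrable fun a => p a * (log (p a) - log (gaussDensity S lam (S⁻¹ *ᵥ η) a))) :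
    ∫ a, (a ⬝ᵥ (S *ᵥ a) + 2 * (a ⬝ᵥ η) + lam * log (p a)) * p a
      = lam * (∫ a, p a * (log (p a) - log (gaussDensity S lam (S⁻¹ *ᵥ η) a)))
        + (-(η ⬝ᵥ (S⁻¹ *ᵥ η)) - (lam / 2) * (m * log (π * lam) - log S.det)) := by
  have hSt : Sᵀ = S := (conjTranspose_eq_transpose_of_trivial S).symm.trans hS.isHermitian.eq
  have hSv : S *ᵥ (S⁻¹ *ᵥ η) = η := by
    rw [mulVec_mulVec, mul_nonsing_inv _ (isUnit_iff_ne_zero.mpr hS.det_pos.ne'), one_mulVec]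
  have hpoint : ∀ a, (a ⬝ᵥ (S *ᵥ a) + 2 * (a ⬝ᵥ η) + lam * log (p a)) * p a
      = lam * (p a * (log (p a) - log (gaussDensity S lam (S⁻¹ *ᵥ η) a)))
        + (-(η ⬝ᵥ (S⁻¹ *ᵥ η)) - (lam / 2) * (m * log (π * lam) - log S.det)) * p a := by
    intro a
    have hq := add_dotProduct_mulVec_add hSt hSv a
    have hg := mul_log_gaussDensity hS hlam (S⁻¹ *ᵥ η) a
    linear_combination p a * (hg - hq)
  rw [integral_congr_ae (Filter.Eventually.of_forall hpoint),
    integral_add (hkl.const_mul lam) (hp_int.const_mul _), integral_const_mul, integral_const_mul,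
    hp_prob, mul_one]

end Functional

theorem entropy_regularized_min_general
    (m : ℕ)
    (S : Matrix (Fin m) (Fin m) ℝ) (hS : S.PosDef)
    (lam : ℝ) (hlam : 0 < lam)
    (η : Fin m → ℝ)
    (p : (Fin m → ℝ) → ℝ) (hp_nonneg : ∀ a, 0 ≤ p a)
    (hp_prob : ∫ a : Fin m → ℝ, p a = 1)
    (hp_int : Integrable p)
    (hp_mom2 : Integrable (fun a : Fin m → ℝ => (a ⬝ᵥ a) * p a))
    (hp_ent : Integrable (fun a : Fin m → ℝ => p a * |Real.log (p a)|)) :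
    -(η ⬝ᵥ (S⁻¹ *ᵥ η))
        - (lam / 2) * ((m : ℝ) * Real.log (Real.pi * lam) - Real.log S.det)
      ≤ ∫ a : Fin m → ℝ,
          (a ⬝ᵥ (S *ᵥ a) + 2 * (a ⬝ᵥ η) + lam * Real.log (p a)) * p a
    ∧ ((∫ a : Fin m → ℝ,
          (a ⬝ᵥ (S *ᵥ a) + 2 * (a ⬝ᵥ η) + lam * Real.log (p a)) * p a
        = -(η ⬝ᵥ (S⁻¹ *ᵥ η))
          - (lam / 2) * ((m : ℝ) * Real.log (Real.pi * lam) - Real.log S.det))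
        ↔ p =ᵐ[volume] gaussDensity S lam (S⁻¹ *ᵥ η)) := by
  have hkl := integrable_mul_log_sub_log_gaussDensity hS hlam (S⁻¹ *ᵥ η) hp_nonneg hp_int
    hp_mom2 hp_ent
  have hg_pos := gaussDensity_pos hS hlam (S⁻¹ *ᵥ η)
  have hg_int := integrable_gaussDensity hS hlam (S⁻¹ *ᵥ η)
  have hpg : ∫ a, p a = ∫ a, gaussDensity S lam (S⁻¹ *ᵥ η) a := by
    rw [hp_prob, integral_gaussDensity hS hlam]
  have hkl_nonneg := integral_mul_log_sub_log_nonneg hp_nonneg hg_pos hp_int hg_int hpg hkl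
  rw [integral_quadratic_add_entropy_eq hS hlam η hp_prob hp_int hkl,
    ← integral_mul_log_sub_log_eq_zero_iff hp_nonneg hg_pos hp_int hg_int hpg hkl, add_eq_right,
    mul_eq_zero, or_iff_right hlam.ne']
  exact ⟨le_add_of_nonneg_left (mul_nonneg hlam.le hkl_nonneg), Iff.rfl⟩

/-- Static entropy minimization: the entropy-regularized quadratic functional
is bounded below by `−ηᵀS⁻¹η − (λ/2)(m log(πλ) − log det S)`, with equality if
and only if `p` equals the Gaussian density `g_{S,λ,S⁻¹η}` almost everywhere. -/
theorem entropy_regularized_min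
    (m : ℕ) (hm : 0 < m)
    (S : Matrix (Fin m) (Fin m) ℝ) (hS : S.PosDef)
    (lam : ℝ) (hlam : 0 < lam)
    (η : Fin m → ℝ)
    (p : (Fin m → ℝ) → ℝ) (hp_meas : Measurable p) (hp_nonneg : ∀ a, 0 ≤ p a)
    (hp_prob : ∫ a : Fin m → ℝ, p a = 1)
    (hp_int : Integrable p)
    (hp_mom2 : Integrable (fun a : Fin m → ℝ => (a ⬝ᵥ a) * p a))
    (hp_ent : Integrable (fun a : Fin m → ℝ => p a * |Real.log (p a)|)) :
    -(η ⬝ᵥ (S⁻¹ *ᵥ η))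
        - (lam / 2) * ((m : ℝ) * Real.log (Real.pi * lam) - Real.log S.det)
      ≤ ∫ a : Fin m → ℝ,
          (a ⬝ᵥ (S *ᵥ a) + 2 * (a ⬝ᵥ η) + lam * Real.log (p a)) * p a
    ∧ ((∫ a : Fin m → ℝ,
          (a ⬝ᵥ (S *ᵥ a) + 2 * (a ⬝ᵥ η) + lam * Real.log (p a)) * p a
        = -(η ⬝ᵥ (S⁻¹ *ᵥ η))
          - (lam / 2) * ((m : ℝ) * Real.log (Real.pi * lam) - Real.log S.det))
        ↔ p =ᵐ[volume] gaussDensity S lam (S⁻¹ *ᵥ η)) :=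
  entropy_regularized_min_general m S hS lam hlam η p hp_nonneg hp_prob hp_int hp_mom2 hp_ent
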